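/- With the setup of candidate sets: for indices i, j, k with k' ∈ K(i',j'), the sum A_{i,k} + B_{k,j} lies in the interval [C_{i,j}, C_{i,j} + 16δm]. -/

import Mathlib

/-- A matrix (as a function on `Fin n`) is `δ`-bounded-difference if entries at
adjacent positions (differing by 1 in one coordinate) differ by at most `δ`. -/
def BDiff {n : ℕ} (δ : ℤ) (A : Fin n → Fin n → ℤ) : Prop :=
  ∀ i j i' j' : Fin n,
    ((i'.val = i.val + 1 ∧ j' = j) ∨ (i' = i ∧ j'.val = j.val + 1)) →
    |A i' j' - A i j| ≤ δ

/-- Representative (first element) of the length-`m` block containing `i`. -/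
def rep {n : ℕ} (m : ℕ) (i : Fin n) : Fin n :=
  ⟨m * (i.val / m),
    lt_of_le_of_lt (by rw [Nat.mul_comm]; exact Nat.div_mul_le_self _ _) i.isLt⟩

/-- Min-plus product `C = A ⋆ B`. -/
def minplus {n : ℕ} (A B : Fin n → Fin n → ℤ) (i j : Fin n) : ℤ :=
  Finset.inf' Finset.univ ⟨i, Finset.mem_univ i⟩ (fun k => A i k + B k j)

/-- Block-approximate min-plus product: minimum over representative indices. -/
def Ctil {n : ℕ} (m : ℕ) (A B : Fin n → Fin n → ℤ) (i j : Fin n) : ℤ :=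
  Finset.inf' ((Finset.univ : Finset (Fin n)).filter fun k => m ∣ k.val)
    ⟨⟨0, i.pos⟩, by simp⟩ (fun k => A (rep m i) k + B k (rep m j))

/-- Candidate set `K(i',j')`. -/
def Kset {n : ℕ} (m : ℕ) (δ : ℤ) (A B : Fin n → Fin n → ℤ) (i j : Fin n) :
    Finset (Fin n) :=
  Finset.univ.filter
    (fun k => m ∣ k.val ∧
      A (rep m i) k + B k (rep m j) ≤ Ctil m A B i j + 8 * δ * m)

/-!
Moving an index to the representative of its block costs at most `δm` per coordinate, so
`A_{i,k} + B_{k,j}` and `A_{i',k'} + B_{k',j'}` differ by at most `4δm`. The lower bound is the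
definition of `C`. For the upper bound, let `k₀` attain `C_{i,j}`; then
`A_{i,k} + B_{k,j} ≤ C̃_{i',j'} + 12δm ≤ A_{i',k₀'} + B_{k₀',j'} + 12δm ≤ C_{i,j} + 16δm`.
-/

lemma abs_sub_le_mul_of_adjacent {n : ℕ} {δ : ℤ} {f : Fin n → ℤ}
    (hf : ∀ a b : Fin n, b.val = a.val + 1 → |f b - f a| ≤ δ) (a : Fin n) :
    ∀ (d : ℕ) (b : Fin n), b.val = a.val + d → |f b - f a| ≤ δ * d := by
  intro d
  induction d with
  | zero =>
    intro b hb
    simp [Fin.ext (hb.trans (Nat.add_zero _))]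
  | succ d ih =>
    intro b hb
    let c : Fin n := ⟨a.val + d, by omega⟩
    calc |f b - f a| ≤ |f b - f c| + |f c - f a| := abs_sub_le _ _ _
      _ ≤ δ + δ * d := add_le_add (hf c b (by simp [c]; omega)) (ih c rfl)
      _ = δ * ↑(d + 1) := by push_cast; ring

lemma rep_val_add_mod {n : ℕ} (m : ℕ) (i : Fin n) : (rep m i).val + i.val % m = i.val :=
  Nat.div_add_mod i.val m

lemma dvd_rep_val {n : ℕ} (m : ℕ) (i : Fin n) : m ∣ (rep m i).val :=
  Dvd.intro _ rfl

namespace BDiff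

variable {n : ℕ} {δ : ℤ} {A : Fin n → Fin n → ℤ}

lemma abs_sub_row_le (hA : BDiff δ A) (j : Fin n) (d : ℕ) {i i' : Fin n}
    (h : i.val = i'.val + d) : |A i j - A i' j| ≤ δ * d :=
  abs_sub_le_mul_of_adjacent (fun a b hab => hA a j b j (Or.inl ⟨hab, rfl⟩)) i' d i h

lemma abs_sub_col_le (hA : BDiff δ A) (i : Fin n) (d : ℕ) {j j' : Fin n}
    (h : j.val = j'.val + d) : |A i j - A i j'| ≤ δ * d :=
  abs_sub_le_mul_of_adjacent (fun a b hab => hA i a i b (Or.inr ⟨rfl, hab⟩)) j' d j h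

lemma abs_sub_rep_le (hA : BDiff δ A) (hδ : 0 ≤ δ) {m : ℕ} (hm : 0 < m) (i k : Fin n) :
    |A i k - A (rep m i) (rep m k)| ≤ 2 * δ * m := by
  have hmod (x : Fin n) : δ * ↑(x.val % m) ≤ δ * m :=
    mul_le_mul_of_nonneg_left (by exact_mod_cast (Nat.mod_lt _ hm).le) hδ
  calc |A i k - A (rep m i) (rep m k)|
      ≤ |A i k - A (rep m i) k| + |A (rep m i) k - A (rep m i) (rep m k)| := abs_sub_le _ _ _
    _ ≤ δ * ↑(i.val % m) + δ * ↑(k.val % m) :=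
        add_le_add (hA.abs_sub_row_le k _ (rep_val_add_mod m i).symm)
          (hA.abs_sub_col_le _ _ (rep_val_add_mod m k).symm)
    _ ≤ 2 * δ * m := by linarith [hmod i, hmod k]

end BDiff

lemma abs_add_sub_rep_le {n : ℕ} {δ : ℤ} {A B : Fin n → Fin n → ℤ} (hA : BDiff δ A)
    (hB : BDiff δ B) (hδ : 0 ≤ δ) {m : ℕ} (hm : 0 < m) (i j k : Fin n) :
    |A i k + B k j - (A (rep m i) (rep m k) + B (rep m k) (rep m j))| ≤ 4 * δ * m := by
  have hA' := hA.abs_sub_rep_le hδ hm i k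
  have hB' := hB.abs_sub_rep_le hδ hm k j
  calc _ = |(A i k - A (rep m i) (rep m k)) + (B k j - B (rep m k) (rep m j))| := by ring_nf
    _ ≤ _ := abs_add_le _ _
    _ ≤ 4 * δ * m := by linarith

lemma minplus_le {n : ℕ} (A B : Fin n → Fin n → ℤ) (i j k : Fin n) :
    minplus A B i j ≤ A i k + B k j :=
  Finset.inf'_le _ (Finset.mem_univ k)

lemma exists_minplus_eq {n : ℕ} (A B : Fin n → Fin n → ℤ) (i j : Fin n) :
    ∃ k, minplus A B i j = A i k + B k j := by
  obtain ⟨k, -, hk⟩ := Finset.exists_mem_eq_inf' ⟨i, Finset.mem_univ i⟩ (fun k => A i k + B k j)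
  exact ⟨k, hk⟩

lemma Ctil_le {n : ℕ} (m : ℕ) (A B : Fin n → Fin n → ℤ) (i j : Fin n) {k : Fin n}
    (hk : m ∣ k.val) : Ctil m A B i j ≤ A (rep m i) k + B k (rep m j) :=
  Finset.inf'_le _ (Finset.mem_filter.mpr ⟨Finset.mem_univ k, hk⟩)

/-- if the representative of `k`'s block lies in `K(i',j')`, then
`A_{i,k} + B_{k,j} ∈ [C_{i,j}, C_{i,j} + 16δm]`. -/
theorem stmt6 {n : ℕ} (δ : ℤ) (hδ : 0 < δ) (A B : Fin n → Fin n → ℤ)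
    (hA : BDiff δ A) (hB : BDiff δ B) (m : ℕ) (hm : m ∣ n) (i j k : Fin n)
    (hk : rep m k ∈ Kset m δ A B i j) :
    minplus A B i j ≤ A i k + B k j ∧
    A i k + B k j ≤ minplus A B i j + 16 * δ * m := by
  refine ⟨minplus_le A B i j k, ?_⟩
  have hm0 : 0 < m := Nat.pos_of_dvd_of_pos hm i.pos
  have hK : A (rep m i) (rep m k) + B (rep m k) (rep m j) ≤ Ctil m A B i j + 8 * δ * m :=
    (Finset.mem_filter.mp hk).2.2
  obtain ⟨k₀, hk₀⟩ := exists_minplus_eq A B i j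
  have hC := Ctil_le m A B i j (dvd_rep_val m k₀)
  have hnear := abs_le.mp (abs_add_sub_rep_le hA hB hδ.le hm0 i j k)
  have hnear₀ := abs_le.mp (abs_add_sub_rep_le hA hB hδ.le hm0 i j k₀)
  linarith
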